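/- arXiv:2310.08562 — 2 statements merged into one kernel-verified Lean document; each statement's English description precedes it below -/
import Mathlib

section
/- Mass around the minimizer along the GA evolution (Proposition on f_(k)(B_r(x⋆))): Let E : ℝ^d → ℝ be continuous with unique global minimizer x⋆ satisfying the growth conditions, let f_(0) ∈ P_2(ℝ^d) with x⋆ ∈ supp(f_(0)), and let (f_(k)) be the GA kinetic sequence with Boltzmann selection. Fix r > 0 and a time horizon T⋆ > 0. Then there exists δ_r > 0, depending only on r, d, T⋆, c_u, c_l, R_l, σ (and not on α), such that for all α sufficiently large (depending on r, T⋆, c_u, c_l, R_l, σ), f_(k)(B_r(x⋆)) ≥ min{ f_(0)(B_r(x⋆)), δ_r } for all k with kτ ∈ [0, T⋆]. -/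
open MeasureTheory ProbabilityTheory Real Set

noncomputable section

/-- The search space `ℝ^d` with the Euclidean norm. -/
abbrev Ed (d : ℕ) : Type := EuclideanSpace ℝ (Fin d)

/-- The standard Gaussian measure `N(0, I_d)` on `ℝ^d`. -/
def stdGaussian (d : ℕ) : Measure (Ed d) :=
  (Measure.pi fun _ : Fin d => gaussianReal 0 1).map
    (MeasurableEquiv.toLp 2 (Fin d → ℝ))

/-- The crossover–mutation collision map
`C(x, x_*, ξ) = (1-γ)⊙x + γ⊙x_* + σξ` (with `D = I_d`). -/
def coll {d : ℕ} (γ : Fin d → ℝ) (σ : ℝ) (x xs ξ : Ed d) : Ed d :=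
  WithLp.toLp 2 (fun i => (1 - γ i) * x i + γ i * xs i + σ * ξ i)

/-- The Boltzmann–Gibbs measure `η^α[f]`, with density `e^{-αE}/Z^α[f]` w.r.t. `f`. -/
def gibbs {d : ℕ} (E : Ed d → ℝ) (α : ℝ) (f : Measure (Ed d)) : Measure (Ed d) :=
  (∫⁻ x, ENNReal.ofReal (Real.exp (-α * E x)) ∂f)⁻¹ •
    f.withDensity fun x => ENNReal.ofReal (Real.exp (-α * E x))

/-- One step of the GA kinetic evolution with Boltzmann selection:
`f ↦ (1-τ) f + τ C_#(η^α[f] ⊗ η^α[f] ⊗ N(0,I_d))`. -/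
def gaStep {d : ℕ} (E : Ed d → ℝ) (α τ σ : ℝ) (γ : Fin d → ℝ)
    (f : Measure (Ed d)) : Measure (Ed d) :=
  ENNReal.ofReal (1 - τ) • f +
    ENNReal.ofReal τ •
      Measure.map (fun p : (Ed d × Ed d) × Ed d => coll γ σ p.1.1 p.1.2 p.2)
        (((gibbs E α f).prod (gibbs E α f)).prod (stdGaussian d))

/-- The GA kinetic sequence `(f_(k))` with Boltzmann selection started at `f0`. -/
def gaSeq {d : ℕ} (E : Ed d → ℝ) (α τ σ : ℝ) (γ : Fin d → ℝ)
    (f0 : Measure (Ed d)) : ℕ → Measure (Ed d)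
  | 0 => f0
  | k + 1 => gaStep E α τ σ γ (gaSeq E α τ σ γ f0 k)

/-- The mean `m[f] = ∫ x df(x)`. -/
def mean {d : ℕ} (f : Measure (Ed d)) : Ed d := ∫ x, x ∂f

/-- The weighted mean `m^α[f] = (∫ x e^{-αE(x)} df(x)) / (∫ e^{-αE(x)} df(x))`. -/
def wmean {d : ℕ} (E : Ed d → ℝ) (α : ℝ) (f : Measure (Ed d)) : Ed d :=
  (∫ x, Real.exp (-α * E x) ∂f)⁻¹ • ∫ x, Real.exp (-α * E x) • x ∂f

namespace GAAux
open scoped ENNReal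

variable {d : ℕ}

/-- The Boltzmann weight as an `ℝ≥0∞`-valued function. -/
def w (E : Ed d → ℝ) (α : ℝ) (x : Ed d) : ℝ≥0∞ := ENNReal.ofReal (Real.exp (-α * E x))

lemma w_meas (E : Ed d → ℝ) (hE : Continuous E) (α : ℝ) : Measurable (w E α) :=
  (ENNReal.measurable_ofReal.comp (Real.continuous_exp.measurable.comp
    ((measurable_const.mul hE.measurable)))).comp measurable_id

lemma w_pos (E : Ed d → ℝ) (α : ℝ) (x : Ed d) : 0 < w E α x :=
  ENNReal.ofReal_pos.2 (Real.exp_pos _)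

lemma Z_pos (E : Ed d → ℝ) (hE : Continuous E) (α : ℝ) (f : Measure (Ed d))
    [IsProbabilityMeasure f] : 0 < ∫⁻ x, w E α x ∂f := by
  rw [lintegral_pos_iff_support (w_meas E hE α)]
  have : Function.support (w E α) = Set.univ := by
    ext x; simp [Function.support, (w_pos E α x).ne']
  rw [this]
  simp

lemma Z_lt_top (E : Ed d → ℝ) (xstar : Ed d) (hmin : ∀ x, E xstar ≤ E x)
    {α : ℝ} (hα : 0 ≤ α) (f : Measure (Ed d)) [IsProbabilityMeasure f] :
    ∫⁻ x, w E α x ∂f < ⊤ := by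
  have hb : ∀ x, w E α x ≤ ENNReal.ofReal (Real.exp (-α * E xstar)) := by
    intro x
    exact ENNReal.ofReal_le_ofReal (Real.exp_le_exp.2 (by nlinarith [hmin x]))
  calc ∫⁻ x, w E α x ∂f ≤ ∫⁻ _, ENNReal.ofReal (Real.exp (-α * E xstar)) ∂f :=
        lintegral_mono hb
    _ = ENNReal.ofReal (Real.exp (-α * E xstar)) := by simp
    _ < ⊤ := ENNReal.ofReal_lt_top

lemma gibbs_apply (E : Ed d → ℝ) (hE : Continuous E) (α : ℝ) (f : Measure (Ed d))
    [SFinite f] (s : Set (Ed d)) :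
    gibbs E α f s = (∫⁻ x, w E α x ∂f)⁻¹ * ∫⁻ x in s, w E α x ∂f := by
  rw [gibbs, Measure.smul_apply, withDensity_apply' _ s]
  rfl

theorem gibbs_prob (E : Ed d → ℝ) (hE : Continuous E) (xstar : Ed d)
    (hmin : ∀ x, E xstar ≤ E x) {α : ℝ} (hα : 0 ≤ α) (f : Measure (Ed d))
    [IsProbabilityMeasure f] : IsProbabilityMeasure (gibbs E α f) := by
  constructor
  rw [gibbs_apply E hE α f Set.univ, Measure.restrict_univ,
    ENNReal.inv_mul_cancel (Z_pos E hE α f).ne' (Z_lt_top E xstar hmin hα f).ne]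

end GAAux
namespace GAAux
open scoped ENNReal

lemma gibbs_closedBall_ge_half {d : ℕ} (E : Ed d → ℝ) (hE : Continuous E) (xstar : Ed d)
    (hmin : ∀ x, E xstar ≤ E x) (cu cl Rl : ℝ)
    (hgu : ∀ x, E x - E xstar ≤ cu * (1 + ‖x‖ ^ 2))
    (hgl : ∀ x, Rl < ‖x‖ → cl * ‖x‖ ^ 2 ≤ E x - E xstar)
    (hcl : 0 < cl)
    (r : ℝ) (M : ℝ) (hM : Rl < M) (hM0 : 0 < M)
    (ε : ℝ) (hε : 0 < ε) {α : ℝ} (hα : 0 ≤ α)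
    (hkey : Real.exp (-(α * (cl * M ^ 2 - cu * (1 + (‖xstar‖ + r) ^ 2)))) ≤ ε / 2)
    (f : Measure (Ed d)) [IsProbabilityMeasure f]
    (hfB : ENNReal.ofReal ε ≤ f (Metric.closedBall xstar r)) :
    (2 : ℝ≥0∞)⁻¹ ≤ gibbs E α f (Metric.closedBall (0 : Ed d) M) := by
  set A : ℝ := cu * (1 + (‖xstar‖ + r) ^ 2) with hA
  set Z : ℝ≥0∞ := ∫⁻ x, w E α x ∂f with hZ
  have hZ0 : Z ≠ 0 := (Z_pos E hE α f).ne'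
  have hZtop : Z ≠ ⊤ := (Z_lt_top E xstar hmin hα f).ne
  -- lower bound on Z
  have hZlow : ENNReal.ofReal (Real.exp (-α * (E xstar + A))) * ENNReal.ofReal ε ≤ Z := by
    calc ENNReal.ofReal (Real.exp (-α * (E xstar + A))) * ENNReal.ofReal ε
        ≤ ENNReal.ofReal (Real.exp (-α * (E xstar + A))) * f (Metric.closedBall xstar r) :=
          mul_le_mul_right hfB _
      _ = ∫⁻ _ in Metric.closedBall xstar r, ENNReal.ofReal (Real.exp (-α * (E xstar + A))) ∂f := by
          rw [setLIntegral_const, mul_comm]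
      _ ≤ ∫⁻ x in Metric.closedBall xstar r, w E α x ∂f := by
          refine setLIntegral_mono (w_meas E hE α) ?_
          intro x hx
          refine ENNReal.ofReal_le_ofReal (Real.exp_le_exp.2 ?_)
          have hx' : ‖x‖ ≤ ‖xstar‖ + r := by
            have := mem_closedBall_iff_norm.1 hx
            calc ‖x‖ ≤ ‖xstar‖ + ‖x - xstar‖ := norm_le_insert' x xstar
              _ ≤ ‖xstar‖ + r := by linarith
          have hx2 : ‖x‖ ^ 2 ≤ (‖xstar‖ + r) ^ 2 := by
            have := norm_nonneg x
            nlinarith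
          have hEx : E x ≤ E xstar + A := by
            have h1 := hgu x
            have hcu0 : 0 ≤ cu := by nlinarith [hgu xstar, norm_nonneg xstar, sq_nonneg ‖xstar‖]
            rw [hA]; nlinarith
          nlinarith
      _ ≤ Z := by rw [hZ]; exact setLIntegral_le_lintegral _ _
  -- upper bound on numerator over tail
  have hnum : ∫⁻ x in (Metric.closedBall (0 : Ed d) M)ᶜ, w E α x ∂f
      ≤ ENNReal.ofReal (Real.exp (-α * (E xstar + cl * M ^ 2))) := by
    calc ∫⁻ x in (Metric.closedBall (0 : Ed d) M)ᶜ, w E α x ∂f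
        ≤ ∫⁻ _ in (Metric.closedBall (0 : Ed d) M)ᶜ,
            ENNReal.ofReal (Real.exp (-α * (E xstar + cl * M ^ 2))) ∂f := by
          refine setLIntegral_mono' (measurableSet_closedBall.compl) ?_
          intro x hx
          have hxM : M < ‖x‖ := by
            simpa [Metric.mem_closedBall, dist_zero_right, not_le] using hx
          have h1 := hgl x (lt_trans hM hxM)
          have hx2 : M ^ 2 ≤ ‖x‖ ^ 2 := by nlinarith
          have h2 : cl * M ^ 2 ≤ cl * ‖x‖ ^ 2 := mul_le_mul_of_nonneg_left hx2 hcl.le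
          refine ENNReal.ofReal_le_ofReal (Real.exp_le_exp.2 ?_)
          nlinarith
      _ = ENNReal.ofReal (Real.exp (-α * (E xstar + cl * M ^ 2)))
            * f (Metric.closedBall (0 : Ed d) M)ᶜ := by rw [setLIntegral_const]
      _ ≤ ENNReal.ofReal (Real.exp (-α * (E xstar + cl * M ^ 2))) * 1 :=
          mul_le_mul_right prob_le_one _
      _ = _ := mul_one _
  -- the tail has mass at most 1/2
  have htail : gibbs E α f (Metric.closedBall (0 : Ed d) M)ᶜ ≤ 2⁻¹ := by
    rw [gibbs_apply E hE α f]
    rw [← hZ]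
    rw [ENNReal.inv_mul_le_iff hZ0 hZtop]
    calc ∫⁻ x in (Metric.closedBall (0 : Ed d) M)ᶜ, w E α x ∂f
        ≤ ENNReal.ofReal (Real.exp (-α * (E xstar + cl * M ^ 2))) := hnum
      _ ≤ 2⁻¹ * (ENNReal.ofReal (Real.exp (-α * (E xstar + A))) * ENNReal.ofReal ε) := by
          rw [show (2 : ℝ≥0∞)⁻¹ = ENNReal.ofReal 2⁻¹ by
            rw [ENNReal.ofReal_inv_of_pos two_pos, ENNReal.ofReal_ofNat]]
          rw [← ENNReal.ofReal_mul (by positivity), ← ENNReal.ofReal_mul (by positivity)]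
          refine ENNReal.ofReal_le_ofReal ?_
          have hexp : Real.exp (-α * (E xstar + cl * M ^ 2))
              = Real.exp (-(α * (cl * M ^ 2 - A))) * Real.exp (-α * (E xstar + A)) := by
            rw [← Real.exp_add]; ring_nf
          rw [hexp]
          have hp : (0:ℝ) < Real.exp (-α * (E xstar + A)) := Real.exp_pos _
          calc Real.exp (-(α * (cl * M ^ 2 - A))) * Real.exp (-α * (E xstar + A))
              ≤ (ε / 2) * Real.exp (-α * (E xstar + A)) := by
                exact mul_le_mul_of_nonneg_right hkey hp.le
            _ = 2⁻¹ * (Real.exp (-α * (E xstar + A)) * ε) := by ring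
      _ ≤ 2⁻¹ * Z := mul_le_mul_right hZlow _
      _ = Z * 2⁻¹ := mul_comm _ _
  -- conclude
  haveI : IsProbabilityMeasure (gibbs E α f) := gibbs_prob E hE xstar hmin hα f
  have hsum := measure_add_measure_compl (μ := gibbs E α f)
    (measurableSet_closedBall (x := (0:Ed d)) (ε := M))
  have h1 : (1 : ℝ≥0∞) ≤ gibbs E α f (Metric.closedBall (0 : Ed d) M) + 2⁻¹ := by
    rw [show (1:ℝ≥0∞) = gibbs E α f Set.univ from (measure_univ).symm, ← hsum]
    exact add_le_add le_rfl htail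
  have := tsub_le_iff_right.2 h1
  calc (2:ℝ≥0∞)⁻¹ = 1 - 2⁻¹ := ENNReal.one_sub_inv_two.symm
    _ ≤ _ := this
end GAAux
namespace GAAux
open scoped ENNReal

lemma abs_coord_le_norm {d : ℕ} (c : Ed d) (i : Fin d) : |c i| ≤ ‖c‖ := by
  rw [EuclideanSpace.norm_eq]
  rw [show |c i| = Real.sqrt (|c i| ^ 2) by rw [Real.sqrt_sq_eq_abs, abs_abs]]
  apply Real.sqrt_le_sqrt
  have := Finset.single_le_sum (f := fun j => ‖c j‖ ^ 2)
    (fun j _ => sq_nonneg _) (Finset.mem_univ i)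
  simpa [sq_abs] using this

lemma gaussianReal_Icc_lb (a t m : ℝ) (ht : 0 < t) (hm : |a| + t ≤ m) :
    ENNReal.ofReal (2 * t * (Real.sqrt (2 * π))⁻¹ * Real.exp (-m ^ 2 / 2)) ≤
      gaussianReal 0 1 (Set.Icc (a - t) (a + t)) := by
  rw [gaussianReal_apply 0 (one_ne_zero) _]
  have hlb : ∀ x ∈ Set.Icc (a - t) (a + t),
      ENNReal.ofReal ((Real.sqrt (2 * π))⁻¹ * Real.exp (-m ^ 2 / 2)) ≤ gaussianPDF 0 1 x := by
    intro x hx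
    rw [gaussianPDF]
    refine ENNReal.ofReal_le_ofReal ?_
    simp only [gaussianPDFReal, NNReal.coe_one, mul_one, sub_zero]
    have hxm : |x| ≤ m := by
      rw [abs_le]
      rcases hx with ⟨h1, h2⟩
      rcases abs_le.1 (le_refl |a|) with ⟨ha1, ha2⟩
      constructor <;> nlinarith [abs_nonneg a]
    have hx2 : x ^ 2 ≤ m ^ 2 := by nlinarith [abs_nonneg x, neg_abs_le x, le_abs_self x]
    have key : Real.exp (-m ^ 2 / 2) ≤ Real.exp (-x ^ 2 / 2) := by
      apply Real.exp_le_exp.2; nlinarith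
    exact mul_le_mul_of_nonneg_left key (by positivity)
  calc ENNReal.ofReal (2 * t * (Real.sqrt (2 * π))⁻¹ * Real.exp (-m ^ 2 / 2))
      = ENNReal.ofReal ((Real.sqrt (2 * π))⁻¹ * Real.exp (-m ^ 2 / 2))
          * volume (Set.Icc (a - t) (a + t)) := by
        rw [Real.volume_Icc, show a + t - (a - t) = 2 * t by ring,
          ← ENNReal.ofReal_mul (by positivity)]
        ring_nf
    _ = ∫⁻ _ in Set.Icc (a - t) (a + t),
          ENNReal.ofReal ((Real.sqrt (2 * π))⁻¹ * Real.exp (-m ^ 2 / 2)) := by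
        rw [setLIntegral_const, mul_comm]
    _ ≤ ∫⁻ x in Set.Icc (a - t) (a + t), gaussianPDF 0 1 x :=
        setLIntegral_mono' measurableSet_Icc hlb

lemma stdGaussian_closedBall_lb {d : ℕ} (hd : 1 ≤ d) (c : Ed d) (C s : ℝ)
    (hs : 0 < s) (hC : ‖c‖ ≤ C) :
    ENNReal.ofReal ((2 * (s / Real.sqrt d) * (Real.sqrt (2 * π))⁻¹ *
        Real.exp (-(C + s / Real.sqrt d) ^ 2 / 2)) ^ d) ≤
      stdGaussian d (Metric.closedBall c s) := by
  have hd0 : (0:ℝ) < Real.sqrt d := Real.sqrt_pos.2 (by exact_mod_cast hd)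
  set t : ℝ := s / Real.sqrt d with htdef
  have ht : 0 < t := div_pos hs hd0
  have hC0 : 0 ≤ C := le_trans (norm_nonneg c) hC
  -- the cube is contained in the ball
  set cube : Set (Ed d) := {x : Ed d | ∀ i, x i ∈ Set.Icc (c i - t) (c i + t)} with hcube
  have hsub : cube ⊆ Metric.closedBall c s := by
    intro x hx
    rw [Metric.mem_closedBall, EuclideanSpace.dist_eq]
    have hsum : ∑ i, dist (x i) (c i) ^ 2 ≤ s ^ 2 := by
      have hterm : ∀ i : Fin d, dist (x i) (c i) ^ 2 ≤ t ^ 2 := by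
        intro i
        rcases hx i with ⟨h1, h2⟩
        rw [Real.dist_eq]
        have : |x i - c i| ≤ t := by rw [abs_le]; constructor <;> linarith
        nlinarith [abs_nonneg (x i - c i)]
      calc ∑ i, dist (x i) (c i) ^ 2 ≤ ∑ _i : Fin d, t ^ 2 :=
            Finset.sum_le_sum fun i _ => hterm i
        _ = d * t ^ 2 := by rw [Finset.sum_const]; simp [mul_comm]
        _ = s ^ 2 := by
            have hdne : (d:ℝ) ≠ 0 := by
              exact_mod_cast (Nat.pos_of_ne_zero (by omega)).ne'
            rw [htdef, div_pow, Real.sq_sqrt (by positivity : (0:ℝ) ≤ (d:ℝ))]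
            field_simp
    calc Real.sqrt (∑ i, dist (x i) (c i) ^ 2) ≤ Real.sqrt (s ^ 2) :=
          Real.sqrt_le_sqrt hsum
      _ = s := Real.sqrt_sq hs.le
  -- compute the Gaussian measure of the cube
  have hcubeval : stdGaussian d cube
      = ∏ i : Fin d, gaussianReal 0 1 (Set.Icc (c i - t) (c i + t)) := by
    rw [_root_.stdGaussian, MeasurableEquiv.map_apply]
    have : (MeasurableEquiv.toLp 2 (Fin d → ℝ)) ⁻¹' cube
        = Set.pi Set.univ (fun i => Set.Icc (c i - t) (c i + t)) := by
      ext y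
      simp only [Set.mem_preimage, hcube, Set.mem_setOf_eq, Set.mem_pi, Set.mem_univ,
        forall_true_left]
      rfl
    rw [this, Measure.pi_pi]
  have hfac : ∀ i : Fin d,
      ENNReal.ofReal (2 * t * (Real.sqrt (2 * π))⁻¹ * Real.exp (-(C + t) ^ 2 / 2)) ≤
        gaussianReal 0 1 (Set.Icc (c i - t) (c i + t)) := by
    intro i
    apply gaussianReal_Icc_lb
    · exact ht
    · have := abs_coord_le_norm c i; linarith
  calc ENNReal.ofReal ((2 * t * (Real.sqrt (2 * π))⁻¹ * Real.exp (-(C + t) ^ 2 / 2)) ^ d)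
      = ENNReal.ofReal (2 * t * (Real.sqrt (2 * π))⁻¹ * Real.exp (-(C + t) ^ 2 / 2)) ^ d := by
        rw [ENNReal.ofReal_pow (by positivity)]
    _ = ∏ _i : Fin d, ENNReal.ofReal (2 * t * (Real.sqrt (2 * π))⁻¹
          * Real.exp (-(C + t) ^ 2 / 2)) := by
        rw [Finset.prod_const]; simp
    _ ≤ ∏ i : Fin d, gaussianReal 0 1 (Set.Icc (c i - t) (c i + t)) :=
        Finset.prod_le_prod' fun i _ => hfac i
    _ = stdGaussian d cube := hcubeval.symm
    _ ≤ stdGaussian d (Metric.closedBall c s) := measure_mono hsub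

end GAAux
namespace GAAux
open scoped ENNReal

/-- Lower bound constant for the Gaussian collision mass. -/
def gc (d : ℕ) (σ xn M r : ℝ) : ℝ :=
  (2 * (r / σ / Real.sqrt d) * (Real.sqrt (2 * π))⁻¹ *
    Real.exp (-((xn + 2 * M) / σ + r / σ / Real.sqrt d) ^ 2 / 2)) ^ d

lemma gc_pos {d : ℕ} (hd : 1 ≤ d) {σ r : ℝ} (xn M : ℝ) (hσ : 0 < σ) (hr : 0 < r) :
    0 < gc d σ xn M r := by
  have hsd : (0:ℝ) < Real.sqrt d := Real.sqrt_pos.2 (by exact_mod_cast hd)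
  have h1 : (0:ℝ) < r / σ / Real.sqrt d := div_pos (div_pos hr hσ) hsd
  have h2 : (0:ℝ) < Real.sqrt (2 * π) := Real.sqrt_pos.2 (by positivity)
  exact pow_pos (by positivity) d

lemma norm_combo_le {d : ℕ} (γ : Fin d → ℝ) (hγ : ∀ i, γ i ∈ Set.Icc (0 : ℝ) 1)
    (x xs : Ed d) {M : ℝ} (hx : ‖x‖ ≤ M) (hxs : ‖xs‖ ≤ M)
    (y : Ed d) (hy : ∀ i, y i = (1 - γ i) * x i + γ i * xs i) :
    ‖y‖ ≤ 2 * M := by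
  have hM0 : 0 ≤ M := le_trans (norm_nonneg x) hx
  have hsq : ∀ (z : Ed d), ∑ i, ‖z i‖ ^ 2 = ‖z‖ ^ 2 := by
    intro z
    rw [EuclideanSpace.norm_eq, Real.sq_sqrt (Finset.sum_nonneg fun i _ => sq_nonneg _)]
  have hbound : ‖y‖ ^ 2 ≤ (2 * M) ^ 2 := by
    rw [← hsq y]
    have hterm : ∀ i : Fin d, ‖y i‖ ^ 2 ≤ 2 * ‖x i‖ ^ 2 + 2 * ‖xs i‖ ^ 2 := by
      intro i
      rcases hγ i with ⟨h0, h1⟩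
      have : |y i| ≤ |x i| + |xs i| := by
        rw [hy i]
        calc |(1 - γ i) * x i + γ i * xs i| ≤ |(1 - γ i) * x i| + |γ i * xs i| := abs_add_le _ _
          _ = (1 - γ i) * |x i| + γ i * |xs i| := by
              rw [abs_mul, abs_mul, abs_of_nonneg (by linarith : (0:ℝ) ≤ 1 - γ i),
                abs_of_nonneg h0]
          _ ≤ |x i| + |xs i| := by nlinarith [abs_nonneg (x i), abs_nonneg (xs i)]
      simp only [Real.norm_eq_abs]
      nlinarith [abs_nonneg (y i), abs_nonneg (x i), abs_nonneg (xs i), sq_abs (y i),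
        sq_abs (x i), sq_abs (xs i), sq_nonneg (|x i| - |xs i|)]
    calc ∑ i, ‖y i‖ ^ 2 ≤ ∑ i, (2 * ‖x i‖ ^ 2 + 2 * ‖xs i‖ ^ 2) :=
          Finset.sum_le_sum fun i _ => hterm i
      _ = 2 * ‖x‖ ^ 2 + 2 * ‖xs‖ ^ 2 := by
          rw [Finset.sum_add_distrib, ← Finset.mul_sum, ← Finset.mul_sum, hsq, hsq]
      _ ≤ (2 * M) ^ 2 := by nlinarith [norm_nonneg x, norm_nonneg xs]
  nlinarith [norm_nonneg y]

lemma slice_lb {d : ℕ} (hd : 1 ≤ d) (γ : Fin d → ℝ) (hγ : ∀ i, γ i ∈ Set.Icc (0 : ℝ) 1)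
    {σ : ℝ} (hσ : 0 < σ) (xstar : Ed d) {r : ℝ} (hr : 0 < r) {M : ℝ}
    (x xs : Ed d) (hx : ‖x‖ ≤ M) (hxs : ‖xs‖ ≤ M) :
    ENNReal.ofReal (gc d σ ‖xstar‖ M r) ≤
      stdGaussian d {ξ : Ed d | coll γ σ x xs ξ ∈ Metric.closedBall xstar r} := by
  set y : Ed d := WithLp.toLp 2 (fun i => (1 - γ i) * x i + γ i * xs i) with hy
  have hyapp : ∀ i, y i = (1 - γ i) * x i + γ i * xs i := fun i => rfl
  have hyn : ‖y‖ ≤ 2 * M := norm_combo_le γ hγ x xs hx hxs y hyapp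
  set c : Ed d := σ⁻¹ • (xstar - y) with hc
  have hcn : ‖c‖ ≤ (‖xstar‖ + 2 * M) / σ := by
    rw [hc, norm_smul, norm_inv, Real.norm_eq_abs, abs_of_pos hσ, inv_mul_eq_div]
    gcongr
    calc ‖xstar - y‖ ≤ ‖xstar‖ + ‖y‖ := norm_sub_le _ _
      _ ≤ ‖xstar‖ + 2 * M := by linarith
  have hsub : Metric.closedBall c (r / σ) ⊆
      {ξ : Ed d | coll γ σ x xs ξ ∈ Metric.closedBall xstar r} := by
    intro ξ hξ
    have hcoll : coll γ σ x xs ξ = y + σ • ξ := by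
      ext i
      simp only [coll, PiLp.toLp_apply, PiLp.add_apply, PiLp.smul_apply, smul_eq_mul, hyapp i]
    simp only [Set.mem_setOf_eq, hcoll, Metric.mem_closedBall, dist_eq_norm]
    have hσc : σ • c = xstar - y := by
      rw [hc, smul_smul, mul_inv_cancel₀ hσ.ne', one_smul]
    have : y + σ • ξ - xstar = σ • (ξ - c) := by
      rw [smul_sub, hσc]; abel
    rw [this, norm_smul, Real.norm_eq_abs, abs_of_pos hσ]
    have hd' := Metric.mem_closedBall.1 hξ
    rw [dist_eq_norm] at hd'
    calc σ * ‖ξ - c‖ ≤ σ * (r / σ) := mul_le_mul_of_nonneg_left hd' hσ.le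
      _ = r := by field_simp
  calc ENNReal.ofReal (gc d σ ‖xstar‖ M r) ≤ stdGaussian d (Metric.closedBall c (r / σ)) := by
        exact stdGaussian_closedBall_lb hd c ((‖xstar‖ + 2 * M) / σ) (r / σ)
          (div_pos hr hσ) hcn
    _ ≤ _ := measure_mono hsub

end GAAux
namespace GAAux
open scoped ENNReal

instance stdGaussian_prob (d : ℕ) : IsProbabilityMeasure (stdGaussian d) := by
  rw [_root_.stdGaussian]
  exact Measure.isProbabilityMeasure_map (MeasurableEquiv.measurable _).aemeasurable

lemma coll_measurable {d : ℕ} (γ : Fin d → ℝ) (σ : ℝ) :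
    Measurable (fun p : (Ed d × Ed d) × Ed d => coll γ σ p.1.1 p.1.2 p.2) := by
  unfold coll
  refine (MeasurableEquiv.toLp 2 (Fin d → ℝ)).measurable.comp ?_
  apply measurable_pi_lambda
  intro i
  have h1 : Measurable fun p : (Ed d × Ed d) × Ed d => p.1.1 i :=
    (measurable_pi_apply i).comp ((MeasurableEquiv.toLp 2 (Fin d → ℝ)).symm.measurable.comp
      (measurable_fst.comp measurable_fst))
  have h2 : Measurable fun p : (Ed d × Ed d) × Ed d => p.1.2 i :=
    (measurable_pi_apply i).comp ((MeasurableEquiv.toLp 2 (Fin d → ℝ)).symm.measurable.comp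
      (measurable_snd.comp measurable_fst))
  have h3 : Measurable fun p : (Ed d × Ed d) × Ed d => p.2 i :=
    (measurable_pi_apply i).comp ((MeasurableEquiv.toLp 2 (Fin d → ℝ)).symm.measurable.comp
      measurable_snd)
  exact ((measurable_const.mul h1).add (measurable_const.mul h2)).add
    (measurable_const.mul h3)

lemma gaStep_prob {d : ℕ} (E : Ed d → ℝ) (hE : Continuous E) (xstar : Ed d)
    (hmin : ∀ x, E xstar ≤ E x) {α τ : ℝ} (hα : 0 ≤ α) (hτ : τ ∈ Set.Ioc (0:ℝ) 1)
    (σ : ℝ) (γ : Fin d → ℝ) (f : Measure (Ed d)) [IsProbabilityMeasure f] :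
    IsProbabilityMeasure (gaStep E α τ σ γ f) := by
  haveI := gibbs_prob E hE xstar hmin hα f
  haveI : IsProbabilityMeasure (Measure.map
      (fun p : (Ed d × Ed d) × Ed d => coll γ σ p.1.1 p.1.2 p.2)
      (((gibbs E α f).prod (gibbs E α f)).prod (stdGaussian d))) :=
    Measure.isProbabilityMeasure_map (coll_measurable γ σ).aemeasurable
  constructor
  rw [gaStep, Measure.add_apply, Measure.smul_apply, Measure.smul_apply,
    smul_eq_mul, smul_eq_mul, measure_univ, measure_univ, mul_one, mul_one,
    ← ENNReal.ofReal_add (by linarith [hτ.2] : (0:ℝ) ≤ 1 - τ) hτ.1.le]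
  norm_num

lemma gaSeq_prob {d : ℕ} (E : Ed d → ℝ) (hE : Continuous E) (xstar : Ed d)
    (hmin : ∀ x, E xstar ≤ E x) {α τ : ℝ} (hα : 0 ≤ α) (hτ : τ ∈ Set.Ioc (0:ℝ) 1)
    (σ : ℝ) (γ : Fin d → ℝ) (f0 : Measure (Ed d)) [IsProbabilityMeasure f0] :
    ∀ k, IsProbabilityMeasure (gaSeq E α τ σ γ f0 k) := by
  intro k
  induction k with
  | zero => simpa [gaSeq] using inferInstanceAs (IsProbabilityMeasure f0)
  | succ n ih =>
    rw [gaSeq]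
    exact gaStep_prob E hE xstar hmin hα hτ σ γ _

lemma gaStep_mass_lb {d : ℕ} (hd : 1 ≤ d) (E : Ed d → ℝ) (hE : Continuous E)
    (xstar : Ed d) (hmin : ∀ x, E xstar ≤ E x) (cu cl Rl : ℝ) (hcl : 0 < cl)
    (hgu : ∀ x, E x - E xstar ≤ cu * (1 + ‖x‖ ^ 2))
    (hgl : ∀ x, Rl < ‖x‖ → cl * ‖x‖ ^ 2 ≤ E x - E xstar)
    {τ : ℝ} (hτ : τ ∈ Set.Ioc (0:ℝ) 1) (γ : Fin d → ℝ)
    (hγ : ∀ i, γ i ∈ Set.Icc (0 : ℝ) 1) {σ : ℝ} (hσ : 0 < σ)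
    {r : ℝ} (hr : 0 < r) {M : ℝ} (hM : Rl < M) (hM0 : 0 < M)
    {ε : ℝ} (hε : 0 < ε) {α : ℝ} (hα : 0 ≤ α)
    (hkey : Real.exp (-(α * (cl * M ^ 2 - cu * (1 + (‖xstar‖ + r) ^ 2)))) ≤ ε / 2)
    (f : Measure (Ed d)) [IsProbabilityMeasure f]
    (hfB : ENNReal.ofReal ε ≤ f (Metric.closedBall xstar r)) :
    ENNReal.ofReal (1 - τ) * f (Metric.closedBall xstar r)
      + ENNReal.ofReal τ * ENNReal.ofReal (gc d σ ‖xstar‖ M r / 4)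
      ≤ gaStep E α τ σ γ f (Metric.closedBall xstar r) := by
  set B := Metric.closedBall xstar r with hB
  set η := gibbs E α f with hη
  haveI : IsProbabilityMeasure η := gibbs_prob E hE xstar hmin hα f
  have hhalf : (2 : ℝ≥0∞)⁻¹ ≤ η (Metric.closedBall (0 : Ed d) M) :=
    gibbs_closedBall_ge_half E hE xstar hmin cu cl Rl hgu hgl hcl r M hM hM0 ε hε hα hkey f hfB
  have hF := coll_measurable γ σ (d := d)
  have hBm : MeasurableSet B := measurableSet_closedBall
  have hνB : ENNReal.ofReal (gc d σ ‖xstar‖ M r) * (2⁻¹ * 2⁻¹) ≤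
      Measure.map (fun p : (Ed d × Ed d) × Ed d => coll γ σ p.1.1 p.1.2 p.2)
        ((η.prod η).prod (stdGaussian d)) B := by
    rw [Measure.map_apply hF hBm, Measure.prod_apply (hF hBm)]
    set K : Set (Ed d × Ed d) := (Metric.closedBall (0:Ed d) M) ×ˢ (Metric.closedBall (0:Ed d) M)
      with hK
    have hKm : MeasurableSet K := measurableSet_closedBall.prod measurableSet_closedBall
    calc ENNReal.ofReal (gc d σ ‖xstar‖ M r) * (2⁻¹ * 2⁻¹)
        ≤ ENNReal.ofReal (gc d σ ‖xstar‖ M r) * (η.prod η) K := by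
          refine mul_le_mul_right ?_ _
          rw [hK, Measure.prod_prod]
          exact mul_le_mul' hhalf hhalf
      _ = ∫⁻ _ in K, ENNReal.ofReal (gc d σ ‖xstar‖ M r) ∂(η.prod η) := by
          rw [setLIntegral_const, mul_comm]
      _ ≤ ∫⁻ p in K, stdGaussian d
            (Prod.mk p ⁻¹' ((fun p : (Ed d × Ed d) × Ed d => coll γ σ p.1.1 p.1.2 p.2) ⁻¹' B))
            ∂(η.prod η) := by
          refine setLIntegral_mono' hKm ?_
          intro p hp
          rcases hp with ⟨hp1, hp2⟩
          have h1 : ‖p.1‖ ≤ M := by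
            have := Metric.mem_closedBall.1 hp1; rwa [dist_zero_right] at this
          have h2 : ‖p.2‖ ≤ M := by
            have := Metric.mem_closedBall.1 hp2; rwa [dist_zero_right] at this
          have := slice_lb hd γ hγ hσ xstar hr p.1 p.2 h1 h2
          exact this
      _ ≤ ∫⁻ p, stdGaussian d
            (Prod.mk p ⁻¹' ((fun p : (Ed d × Ed d) × Ed d => coll γ σ p.1.1 p.1.2 p.2) ⁻¹' B))
            ∂(η.prod η) := setLIntegral_le_lintegral _ _
  have hquarter : ENNReal.ofReal (gc d σ ‖xstar‖ M r / 4)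
      ≤ ENNReal.ofReal (gc d σ ‖xstar‖ M r) * (2⁻¹ * 2⁻¹) := by
    have hgc : 0 ≤ gc d σ ‖xstar‖ M r := (gc_pos hd ‖xstar‖ M hσ hr).le
    rw [show gc d σ ‖xstar‖ M r / 4 = gc d σ ‖xstar‖ M r * (4:ℝ)⁻¹ by ring,
      ENNReal.ofReal_mul hgc]
    refine mul_le_mul_right ?_ _
    rw [ENNReal.ofReal_inv_of_pos (by norm_num : (0:ℝ) < 4)]
    rw [show ((2:ℝ≥0∞)⁻¹ * 2⁻¹) = (2 * 2)⁻¹ by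
      rw [ENNReal.mul_inv (Or.inl (by norm_num)) (Or.inl (by norm_num))]]
    norm_num
  rw [gaStep, Measure.add_apply, Measure.smul_apply, Measure.smul_apply, smul_eq_mul,
    smul_eq_mul]
  exact add_le_add le_rfl (mul_le_mul_right (le_trans hquarter hνB) _)

end GAAux
open scoped ENNReal

open GAAux in
/-- **Mass around the minimizer along the GA evolution.**
Fix `r > 0` and a time horizon `T⋆ > 0`. There is `δ_r > 0` (independent of `α`) such that
for all sufficiently large `α`, `f_(k)(B_r(x⋆)) ≥ min{f_(0)(B_r(x⋆)), δ_r}` for all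
`k` with `kτ ∈ [0, T⋆]`. -/
theorem ga_mass_around_minimizer
    {d : ℕ} (hd : 1 ≤ d) (E : Ed d → ℝ) (hE : Continuous E)
    (xstar : Ed d)
    (hmin : ∀ x, E xstar ≤ E x)
    (huniq : ∀ y, (∀ x, E y ≤ E x) → y = xstar)
    (cu cl Rl : ℝ) (hcu : 0 < cu) (hcl : 0 < cl) (hRl : 0 < Rl)
    (hgu : ∀ x, E x - E xstar ≤ cu * (1 + ‖x‖ ^ 2))
    (hgl : ∀ x, Rl < ‖x‖ → cl * ‖x‖ ^ 2 ≤ E x - E xstar)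
    (τ : ℝ) (hτ : τ ∈ Set.Ioc (0 : ℝ) 1)
    (γ : Fin d → ℝ) (hγ : ∀ i, γ i ∈ Set.Icc (0 : ℝ) 1)
    (σ : ℝ) (hσ : 0 < σ)
    (f0 : Measure (Ed d)) [IsProbabilityMeasure f0]
    (hf0mom : Integrable (fun x => ‖x‖ ^ 2) f0)
    (hsupp : ∀ r > 0, 0 < f0 (Metric.ball xstar r))
    (r : ℝ) (hr : 0 < r) (Tstar : ℝ) (hT : 0 < Tstar) :
    ∃ δr > (0 : ℝ), ∃ α₀ > (0 : ℝ), ∀ α : ℝ, α₀ ≤ α →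
      ∀ k : ℕ, (k : ℝ) * τ ≤ Tstar →
        min (f0 (Metric.closedBall xstar r)) (ENNReal.ofReal δr) ≤
          gaSeq E α τ σ γ f0 k (Metric.closedBall xstar r) := by

  classical
  set B := Metric.closedBall xstar r with hB
  set A : ℝ := cu * (1 + (‖xstar‖ + r) ^ 2) with hA
  have hA0 : 0 ≤ A := by nlinarith [sq_nonneg (‖xstar‖ + r)]
  set M : ℝ := Rl + 1 + Real.sqrt ((A + 1) / cl) with hM
  have hsn : 0 ≤ Real.sqrt ((A + 1) / cl) := Real.sqrt_nonneg _
  have hMgt : Rl < M := by rw [hM]; linarith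
  have hM0 : 0 < M := by rw [hM]; linarith
  have hMD : 1 ≤ cl * M ^ 2 - A := by
    have h1 : Real.sqrt ((A + 1) / cl) ^ 2 = (A + 1) / cl :=
      Real.sq_sqrt (by positivity)
    have hMs : Real.sqrt ((A + 1) / cl) ≤ M := by rw [hM]; linarith
    have h2 : (A + 1) / cl ≤ M ^ 2 := by nlinarith
    have h3 : A + 1 ≤ cl * M ^ 2 := by
      rw [div_le_iff₀ hcl] at h2; linarith [h2]
    linarith
  set g : ℝ := gc d σ ‖xstar‖ M r with hg
  have hgpos : 0 < g := gc_pos hd ‖xstar‖ M hσ hr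
  set δr : ℝ := g / 4 with hδr
  have hδpos : 0 < δr := by rw [hδr]; linarith
  set ε' : ℝ≥0∞ := min (f0 B) (ENNReal.ofReal δr) with hε'
  have hf0B : 0 < f0 B :=
    lt_of_lt_of_le (hsupp r hr) (measure_mono Metric.ball_subset_closedBall)
  have hε'0 : ε' ≠ 0 := (lt_min hf0B (ENNReal.ofReal_pos.2 hδpos)).ne'
  have hε'top : ε' ≠ ⊤ :=
    (lt_of_le_of_lt (min_le_left _ _) (measure_lt_top f0 B)).ne
  set ε : ℝ := ε'.toReal with hεdef
  have hεpos : 0 < ε := ENNReal.toReal_pos hε'0 hε'top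
  have hofReal : ENNReal.ofReal ε = ε' := ENNReal.ofReal_toReal hε'top
  refine ⟨δr, hδpos, max 1 (Real.log (2 / ε)), lt_of_lt_of_le zero_lt_one (le_max_left _ _), ?_⟩
  intro α hαge k _
  have hα1 : 1 ≤ α := le_trans (le_max_left _ _) hαge
  have hα0 : 0 ≤ α := by linarith
  have hkey : Real.exp (-(α * (cl * M ^ 2 - A))) ≤ ε / 2 := by
    have h2 : Real.log (2 / ε) ≤ α := le_trans (le_max_right _ _) hαge
    have h3 : Real.log (2 / ε) ≤ α * (cl * M ^ 2 - A) := by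
      exact le_trans h2 (le_mul_of_one_le_right hα0 hMD)
    calc Real.exp (-(α * (cl * M ^ 2 - A))) ≤ Real.exp (-(Real.log (2 / ε))) :=
          Real.exp_le_exp.2 (by linarith)
      _ = (2 / ε)⁻¹ := by rw [Real.exp_neg, Real.exp_log (by positivity)]
      _ = ε / 2 := by rw [inv_div]
  suffices h : ∀ n : ℕ, ε' ≤ gaSeq E α τ σ γ f0 n B by exact h k
  intro n
  induction n with
  | zero => exact min_le_left _ _
  | succ n ih =>
    haveI : IsProbabilityMeasure (gaSeq E α τ σ γ f0 n) :=
      gaSeq_prob E hE xstar hmin hα0 hτ σ γ f0 n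
    have step := gaStep_mass_lb hd E hE xstar hmin cu cl Rl hcl hgu hgl hτ γ hγ hσ hr
      hMgt hM0 hεpos hα0 hkey (gaSeq E α τ σ γ f0 n)
      (by rw [hofReal]; exact ih)
    rw [show gaSeq E α τ σ γ f0 (n + 1) = gaStep E α τ σ γ (gaSeq E α τ σ γ f0 n) from rfl]
    refine le_trans ?_ step
    have h1 : ε' ≤ ENNReal.ofReal (gc d σ ‖xstar‖ M r / 4) := min_le_right _ _
    calc ε' = (ENNReal.ofReal (1 - τ) + ENNReal.ofReal τ) * ε' := by
          rw [← ENNReal.ofReal_add (by linarith [hτ.2] : (0:ℝ) ≤ 1 - τ) hτ.1.le,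
            sub_add_cancel, ENNReal.ofReal_one, one_mul]
      _ = ENNReal.ofReal (1 - τ) * ε' + ENNReal.ofReal τ * ε' := add_mul _ _ _
      _ ≤ ENNReal.ofReal (1 - τ) * gaSeq E α τ σ γ f0 n B
            + ENNReal.ofReal τ * ENNReal.ofReal (gc d σ ‖xstar‖ M r / 4) :=
          add_le_add (mul_le_mul_right ih _) (mul_le_mul_right h1 _)
end
end

section
/- Quantitative Laplace principle: Let E : ℝ^d → ℝ be continuous with inf E = 0 attained at x⋆, satisfying the inverse continuity condition. Let f ∈ P_1(ℝ^d) with f(B_r(x⋆)) > 0, and fix α > 0. Then for any r ∈ (0, R_p] and any q > 0 such that q + E_r < E_∞, where E_r := sup_{x ∈ B_r(x⋆)} E(x), one has |m^α[f] − x⋆| ≤ ((q + E_r)/c_p)^{1/p} + (e^{−αq}/f(B_r(x⋆))) · ∫ |x − x⋆| df(x). -/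
open MeasureTheory ProbabilityTheory Real Set

noncomputable section

/-- **Quantitative Laplace principle** (Fornasier–Klock–Riedl):
if `inf E = 0` is attained at `x⋆` and `E` satisfies the inverse continuity condition,
then for `r ∈ (0, R_p]` and `q > 0` with `q + E_r < E_∞`,
`|m^α[f] − x⋆| ≤ ((q + E_r)/c_p)^{1/p} + (e^{-αq}/f(B_r(x⋆))) ∫ |x − x⋆| df`. -/
theorem quantitative_laplace_principle
    {d : ℕ} (hd : 1 ≤ d) (E : Ed d → ℝ) (hE : Continuous E)
    (xstar : Ed d) (hmin : E xstar = 0) (hpos : ∀ x, 0 ≤ E x)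
    (cp p Rp Einf : ℝ) (hcp : 0 < cp) (hp : 0 < p) (hRp : 0 < Rp) (hEinf : 0 < Einf)
    (hinv1 : ∀ x, ‖x - xstar‖ ≤ Rp → cp * ‖x - xstar‖ ^ p ≤ E x - E xstar)
    (hinv2 : ∀ x, Rp < ‖x - xstar‖ → Einf < E x - E xstar)
    (f : Measure (Ed d)) [IsProbabilityMeasure f]
    (hf1 : Integrable (fun x => ‖x - xstar‖) f)
    (α : ℝ) (hα : 0 < α)
    (r : ℝ) (hr : r ∈ Set.Ioc (0 : ℝ) Rp)
    (hfr : 0 < f (Metric.closedBall xstar r))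
    (Er : ℝ) (hEr : Er = sSup (E '' Metric.closedBall xstar r))
    (q : ℝ) (hq : 0 < q) (hqEr : q + Er < Einf) :
    ‖wmean E α f - xstar‖ ≤
      ((q + Er) / cp) ^ (1 / p) +
        (Real.exp (-α * q) / (f (Metric.closedBall xstar r)).toReal) *
          ∫ x, ‖x - xstar‖ ∂f := by
  obtain ⟨hr0, hrRp⟩ := hr
  set B := Metric.closedBall xstar r with hB
  have hxB : xstar ∈ B := Metric.mem_closedBall_self hr0.le
  have hBc : IsCompact B := isCompact_closedBall _ _
  have hbdd : BddAbove (E '' B) := (hBc.image hE).bddAbove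
  have hEr0 : 0 ≤ Er := by
    rw [hEr, ← hmin]; exact le_csSup hbdd ⟨xstar, hxB, rfl⟩
  have hErle : ∀ x ∈ B, E x ≤ Er := fun x hx => hEr ▸ le_csSup hbdd ⟨x, hx, rfl⟩
  have hqEr0 : 0 < q + Er := by linarith
  set rt : ℝ := ((q + Er) / cp) ^ (1 / p) with hrt
  have hrt0 : 0 < rt := Real.rpow_pos_of_pos (div_pos hqEr0 hcp) _
  have hrtp : rt ^ p = (q + Er) / cp := by
    rw [hrt, one_div, Real.rpow_inv_rpow (div_pos hqEr0 hcp).le hp.ne']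
  -- key: outside the ball of radius rt the energy is at least q + Er
  have hkey : ∀ x, rt < ‖x - xstar‖ → q + Er ≤ E x := by
    intro x hx
    by_cases hxR : ‖x - xstar‖ ≤ Rp
    · have h1 : cp * ‖x - xstar‖ ^ p ≤ E x := by
        have := hinv1 x hxR; rw [hmin] at this; linarith
      have h2 : rt ^ p ≤ ‖x - xstar‖ ^ p :=
        Real.rpow_le_rpow hrt0.le hx.le hp.le
      have : q + Er = cp * rt ^ p := by rw [hrtp]; field_simp
      nlinarith
    · have := hinv2 x (lt_of_not_ge hxR); rw [hmin] at this; linarith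
  -- pointwise estimate
  have hpt : ∀ x, Real.exp (-α * E x) * ‖x - xstar‖ ≤
      rt * Real.exp (-α * E x) + Real.exp (-α * (q + Er)) * ‖x - xstar‖ := by
    intro x
    by_cases h : ‖x - xstar‖ ≤ rt
    · have h1 : Real.exp (-α * E x) * ‖x - xstar‖ ≤ rt * Real.exp (-α * E x) := by
        rw [mul_comm]
        exact mul_le_mul_of_nonneg_right h (Real.exp_pos _).le
      have h2 : 0 ≤ Real.exp (-α * (q + Er)) * ‖x - xstar‖ := by positivity
      linarith
    · push_neg at h
      have h1 : Real.exp (-α * E x) ≤ Real.exp (-α * (q + Er)) := by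
        apply Real.exp_le_exp.mpr
        have := hkey x h
        nlinarith
      have h2 : Real.exp (-α * E x) * ‖x - xstar‖ ≤
          Real.exp (-α * (q + Er)) * ‖x - xstar‖ :=
        mul_le_mul_of_nonneg_right h1 (norm_nonneg _)
      have h3 : 0 ≤ rt * Real.exp (-α * E x) := by positivity
      linarith
  -- integrability
  have hcontExp : Continuous fun x => Real.exp (-α * E x) :=
    Real.continuous_exp.comp ((continuous_const.mul hE))
  have hexple1 : ∀ x, Real.exp (-α * E x) ≤ 1 := by
    intro x
    apply Real.exp_le_one_iff.mpr
    have := hpos x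
    nlinarith
  have hexpInt : Integrable (fun x => Real.exp (-α * E x)) f := by
    apply Integrable.mono' (integrable_const (1 : ℝ)) hcontExp.aestronglyMeasurable
    filter_upwards with x
    rw [Real.norm_eq_abs, abs_of_pos (Real.exp_pos _)]
    exact hexple1 x
  have hsubmeas : AEStronglyMeasurable (fun x : Ed d => x - xstar) f :=
    (continuous_id.sub continuous_const).aestronglyMeasurable
  have hsubInt : Integrable (fun x : Ed d => x - xstar) f :=
    (integrable_norm_iff hsubmeas).mp hf1
  have hgvInt : Integrable (fun x => Real.exp (-α * E x) • (x - xstar)) f := by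
    apply Integrable.mono' hf1 (hcontExp.aestronglyMeasurable.smul hsubmeas)
    filter_upwards with x
    show ‖Real.exp (-α * E x) • (x - xstar)‖ ≤ ‖x - xstar‖
    rw [norm_smul, Real.norm_eq_abs, abs_of_pos (Real.exp_pos _)]
    calc Real.exp (-α * E x) * ‖x - xstar‖ ≤ 1 * ‖x - xstar‖ :=
      mul_le_mul_of_nonneg_right (hexple1 x) (norm_nonneg _)
    _ = ‖x - xstar‖ := one_mul _
  have hgxInt : Integrable (fun x => Real.exp (-α * E x) • x) f := by
    have h := hgvInt.add (hexpInt.smul_const xstar)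
    have heq : (fun x => Real.exp (-α * E x) • x) =
        (fun x => Real.exp (-α * E x) • (x - xstar)) +
          fun x => Real.exp (-α * E x) • xstar := by
      funext x; simp [smul_sub]
    rw [heq]; exact h
  have hprod : Integrable (fun x => Real.exp (-α * E x) * ‖x - xstar‖) f := by
    apply Integrable.mono' hf1 (hcontExp.aestronglyMeasurable.mul hf1.aestronglyMeasurable)
    filter_upwards with x
    simp only [Pi.mul_apply]
    rw [Real.norm_eq_abs, abs_of_nonneg (mul_nonneg (Real.exp_pos _).le (norm_nonneg _))]
    calc Real.exp (-α * E x) * ‖x - xstar‖ ≤ 1 * ‖x - xstar‖ :=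
      mul_le_mul_of_nonneg_right (hexple1 x) (norm_nonneg _)
    _ = ‖x - xstar‖ := one_mul _
  set Z : ℝ := ∫ x, Real.exp (-α * E x) ∂f with hZ
  -- lower bound on Z
  have hfB : 0 < (f B).toReal := ENNReal.toReal_pos hfr.ne' (measure_ne_top f B)
  have hZlb : Real.exp (-α * Er) * (f B).toReal ≤ Z := by
    have h1 : ∫ _x in B, Real.exp (-α * Er) ∂f ≤ ∫ x in B, Real.exp (-α * E x) ∂f := by
      apply setIntegral_mono_on (integrableOn_const (measure_ne_top f B))
        hexpInt.integrableOn hBc.measurableSet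
      intro x hx
      apply Real.exp_le_exp.mpr
      have := hErle x hx
      nlinarith
    have h2 : ∫ x in B, Real.exp (-α * E x) ∂f ≤ Z := by
      apply setIntegral_le_integral hexpInt
      filter_upwards with x using (Real.exp_pos _).le
    rw [setIntegral_const, smul_eq_mul, mul_comm, measureReal_def] at h1
    linarith
  have hZ0 : 0 < Z := lt_of_lt_of_le (by positivity) hZlb
  -- rewrite wmean - xstar
  have hwm : wmean E α f - xstar = Z⁻¹ • ∫ x, Real.exp (-α * E x) • (x - xstar) ∂f := by
    have hsplit : ∫ x, Real.exp (-α * E x) • (x - xstar) ∂f =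
        (∫ x, Real.exp (-α * E x) • x ∂f) - Z • xstar := by
      rw [hZ, ← integral_smul_const, ← integral_sub hgxInt (hexpInt.smul_const xstar)]
      simp [smul_sub]
    rw [wmean, hsplit, smul_sub, inv_smul_smul₀ hZ0.ne']
  have hnorm : ‖wmean E α f - xstar‖ ≤
      Z⁻¹ * ∫ x, Real.exp (-α * E x) * ‖x - xstar‖ ∂f := by
    rw [hwm, norm_smul, Real.norm_eq_abs, abs_of_pos (inv_pos.mpr hZ0)]
    apply mul_le_mul_of_nonneg_left _ (inv_nonneg.mpr hZ0.le)
    calc ‖∫ x, Real.exp (-α * E x) • (x - xstar) ∂f‖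
        ≤ ∫ x, ‖Real.exp (-α * E x) • (x - xstar)‖ ∂f := norm_integral_le_integral_norm _
      _ = ∫ x, Real.exp (-α * E x) * ‖x - xstar‖ ∂f :=
          integral_congr_ae (Filter.Eventually.of_forall fun x => by
            show ‖Real.exp (-α * E x) • (x - xstar)‖ = Real.exp (-α * E x) * ‖x - xstar‖
            rw [norm_smul, Real.norm_eq_abs, abs_of_pos (Real.exp_pos _)])
  set I : ℝ := ∫ x, ‖x - xstar‖ ∂f with hI
  have hI0 : 0 ≤ I := integral_nonneg fun x => norm_nonneg _
  have hIle : ∫ x, Real.exp (-α * E x) * ‖x - xstar‖ ∂f ≤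
      rt * Z + Real.exp (-α * (q + Er)) * I := by
    calc ∫ x, Real.exp (-α * E x) * ‖x - xstar‖ ∂f
        ≤ ∫ x, (rt * Real.exp (-α * E x) + Real.exp (-α * (q + Er)) * ‖x - xstar‖) ∂f :=
          integral_mono hprod ((hexpInt.const_mul rt).add (hf1.const_mul _)) hpt
      _ = rt * Z + Real.exp (-α * (q + Er)) * I := by
          rw [integral_add (hexpInt.const_mul rt) (hf1.const_mul _),
            integral_const_mul, integral_const_mul]
  have hZinv : Z⁻¹ ≤ (Real.exp (-α * Er) * (f B).toReal)⁻¹ :=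
    inv_anti₀ (by positivity) hZlb
  have hexpq : Real.exp (-α * (q + Er)) * (Real.exp (-α * Er) * (f B).toReal)⁻¹ =
      Real.exp (-α * q) / (f B).toReal := by
    rw [mul_inv, ← Real.exp_neg, ← mul_assoc, ← Real.exp_add, div_eq_mul_inv]
    ring_nf
  calc ‖wmean E α f - xstar‖ ≤ Z⁻¹ * ∫ x, Real.exp (-α * E x) * ‖x - xstar‖ ∂f := hnorm
    _ ≤ Z⁻¹ * (rt * Z + Real.exp (-α * (q + Er)) * I) :=
        mul_le_mul_of_nonneg_left hIle (inv_nonneg.mpr hZ0.le)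
    _ = rt + Real.exp (-α * (q + Er)) * Z⁻¹ * I := by
        field_simp
    _ ≤ rt + Real.exp (-α * (q + Er)) * (Real.exp (-α * Er) * (f B).toReal)⁻¹ * I := by
        have : Real.exp (-α * (q + Er)) * Z⁻¹ ≤
            Real.exp (-α * (q + Er)) * (Real.exp (-α * Er) * (f B).toReal)⁻¹ :=
          mul_le_mul_of_nonneg_left hZinv (Real.exp_pos _).le
        nlinarith
    _ = rt + Real.exp (-α * q) / (f B).toReal * I := by rw [hexpq]
end
end
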